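/- arXiv:2403.18176 — 7 statements merged into one kernel-verified Lean document; each statement's English description precedes it below -/
import Mathlib

section
/- Let (y,b) ∈ ℝ^d×ℝ be such that sign(y^⊤A + b) = ℓ(A) for every A ∈ 𝒜 (with sign(0) := +1), i.e., the classifier x ↦ sign(y^⊤x+b) is correct on all non-manipulated feature vectors. Then for every A ∈ 𝒜 the offset classifier correctly predicts the label of the agent's response: p̂(r(A,y,b), y, b) = ℓ(A). -/
noncomputable section
open scoped Classical
open scoped RealInnerProductSpace

/-- Feature space: `ℝ^d` with the Euclidean (`ℓ₂`) norm as ambient norm. -/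
abbrev E (d : ℕ) : Type := EuclideanSpace ℝ (Fin d)

/-- Sign function with the convention `sgn 0 = +1`. -/
def sgn (t : ℝ) : ℝ := if 0 ≤ t then 1 else -1

/-- Dual norm `‖y‖_* = max { ⟪y,x⟫ : ‖x‖ ≤ 1 }` of a (semi)norm `p`. -/
def dualNorm {d : ℕ} (p : Seminorm ℝ (E d)) (y : E d) : ℝ :=
  sSup ((fun x => ⟪y, x⟫) '' {x | p x ≤ 1})

/-- Predicted label `p̂(x,y,b) = sgn(⟪y,x⟫ + b - 2‖y‖_*/c)`. -/
def pred {d : ℕ} (p : Seminorm ℝ (E d)) (c : ℝ) (x y : E d) (b : ℝ) : ℝ :=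
  sgn (⟪y, x⟫ + b - 2 * dualNorm p y / c)

/-- Agent response `r(A,y,b)`. -/
def resp {d : ℕ} (p : Seminorm ℝ (E d)) (v : E d → E d) (c : ℝ)
    (A y : E d) (b : ℝ) : E d :=
  if y ≠ 0 ∧ 0 ≤ (⟪y, A⟫ + b) / dualNorm p y ∧ (⟪y, A⟫ + b) / dualNorm p y < 2 / c
  then A + (2 / c - (⟪y, A⟫ + b) / dualNorm p y) • v y
  else A

/-- Proxy point `s(A,y,b)`. -/
def proxy {d : ℕ} (p : Seminorm ℝ (E d)) (v : E d → E d) (lbl : E d → ℝ) (c : ℝ)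
    (A y : E d) (b : ℝ) : E d :=
  if y ≠ 0 ∧ 0 ≤ (⟪y, A⟫ + b) / dualNorm p y ∧ (⟪y, A⟫ + b) / dualNorm p y < 2 / c
      ∧ lbl A = -1
  then A - ((⟪y, A⟫ + b) / dualNorm p y) • v y
  else resp p v c A y b

lemma sgn_eq_sgn {s t : ℝ} (h : 0 ≤ s ↔ 0 ≤ t) : sgn s = sgn t := by
  simp only [sgn, h]

/-- Lemma `offset-label`: if the classifier `x ↦ sgn(⟪y,x⟫+b)` is
correct on all non-manipulated feature vectors in `𝒜`, then the offset classifier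
`x ↦ sgn(⟪y,x⟫+b-2‖y‖_*/c)` correctly predicts the label of every agent response. -/
theorem offset_classifier_correct_on_responses
    {d : ℕ} (hd : 1 ≤ d)
    (p : Seminorm ℝ (E d)) (hpdef : ∀ x : E d, p x = 0 → x = 0)
    (c : ℝ) (hc : 0 < c)
    (v : E d → E d) (hv0 : v 0 = 0)
    (hv : ∀ y : E d, y ≠ 0 → p (v y) ≤ 1 ∧ ⟪y, v y⟫ = dualNorm p y)
    (lbl : E d → ℝ) (hlbl : ∀ A : E d, lbl A = 1 ∨ lbl A = -1)
    (𝒜 : Set (E d)) (y : E d) (b : ℝ)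
    (hcorrect : ∀ A ∈ 𝒜, sgn (⟪y, A⟫ + b) = lbl A) :
    ∀ A ∈ 𝒜, pred p c (resp p v c A y b) y b = lbl A := by
  intro A hA
  have hcor := hcorrect A hA
  by_cases hy : y = 0
  · have hD0 : dualNorm p (0 : E d) = 0 := by
      have hset : ((fun x => ⟪(0 : E d), x⟫) '' {x : E d | p x ≤ 1}) = {0} := by
        apply Set.eq_singleton_iff_unique_mem.mpr
        refine ⟨⟨0, by simp, by simp⟩, ?_⟩
        rintro t ⟨x, hx, rfl⟩
        simp
      rw [dualNorm, hset, csSup_singleton]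
    subst hy
    rw [pred, resp, if_neg (by simp), hD0]
    simpa using hcor
  · obtain ⟨hvp, hvD⟩ := hv y hy
    have hDnn : 0 ≤ dualNorm p y := by
      rw [dualNorm]
      apply Real.sSup_nonneg'
      exact ⟨0, ⟨0, by simp, by simp⟩, le_rfl⟩
    have hcne : c ≠ 0 := ne_of_gt hc
    rw [← hcor, pred, resp]
    by_cases hD0 : dualNorm p y = 0
    · have hcond : (y ≠ 0 ∧ 0 ≤ (⟪y, A⟫ + b) / dualNorm p y
          ∧ (⟪y, A⟫ + b) / dualNorm p y < 2 / c) := by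
        refine ⟨hy, ?_, ?_⟩
        · rw [hD0, div_zero]
        · rw [hD0, div_zero]; positivity
      rw [if_pos hcond, inner_add_right, real_inner_smul_right, hvD, hD0]
      apply sgn_eq_sgn
      norm_num
    · have hDpos : 0 < dualNorm p y := lt_of_le_of_ne hDnn (Ne.symm hD0)
      by_cases hcond : 0 ≤ (⟪y, A⟫ + b) / dualNorm p y
          ∧ (⟪y, A⟫ + b) / dualNorm p y < 2 / c
      · rw [if_pos ⟨hy, hcond⟩, inner_add_right, real_inner_smul_right, hvD]
        apply sgn_eq_sgn
        have hq := div_mul_cancel₀ (⟪y, A⟫ + b) hD0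
        have key : ∀ g D cc : ℝ, D ≠ 0 → cc ≠ 0 →
            g + (2 / cc - (g + b) / D) * D + b - 2 * D / cc = 0 := by
          intro g D cc hD hcc
          field_simp
          ring
        have key' := key ⟪y, A⟫ (dualNorm p y) c hD0 hcne
        constructor <;> intro h
        · linarith [hq, mul_nonneg hcond.1 hDnn]
        · linarith [key']
      · rw [if_neg (by tauto)]
        apply sgn_eq_sgn
        rcases not_and_or.mp hcond with h | h
        · have hneg : ⟪y, A⟫ + b < 0 := by
            by_contra hge
            push_neg at hge
            exact h (div_nonneg hge hDnn)
          have hpos : 0 < 2 * dualNorm p y / c := by positivity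
          constructor <;> intro <;> linarith
        · have hle : 2 / c ≤ (⟪y, A⟫ + b) / dualNorm p y := not_lt.mp h
          have h2 : 2 * dualNorm p y ≤ (⟪y, A⟫ + b) * c :=
            (div_le_div_iff₀ hc hDpos).mp hle
          have h3 : 2 * dualNorm p y / c ≤ ⟪y, A⟫ + b := by
            rw [div_le_iff₀ hc]; linarith
          have h4 : 0 ≤ 2 * dualNorm p y / c := by positivity
          constructor <;> intro <;> linarith
end
end

section
/- Fix (y,b) ∈ ℝ^d×ℝ and A ∈ ℝ^d. If the prediction on the agent response is correct, i.e., p̂(r(A,y,b),y,b) = ℓ(A), then ℓ(A)·(y^⊤ s(A,y,b) + b) ≥ 0; if the prediction is incorrect, i.e., p̂(r(A,y,b),y,b) ≠ ℓ(A), then ℓ(A)·(y^⊤ s(A,y,b) + b) ≤ 0. -/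
noncomputable section
open scoped Classical
open scoped RealInnerProductSpace

lemma dualNorm_zero' {d : ℕ} (p : Seminorm ℝ (E d)) : dualNorm p 0 = 0 := by
  have h : ((fun x => ⟪(0:E d), x⟫) '' {x | p x ≤ 1}) = {0} := by
    apply Set.eq_singleton_iff_nonempty_unique_mem.2
    constructor
    · exact ⟨0, ⟨0, by simp, by simp⟩⟩
    · rintro z ⟨x, -, rfl⟩; simp
  rw [dualNorm, h, csSup_singleton]

lemma seminorm_upper' {d : ℕ} (p : Seminorm ℝ (E d)) :
    ∃ C : ℝ, 0 ≤ C ∧ ∀ x : E d, p x ≤ C * ‖x‖ := by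
  classical
  set bb := EuclideanSpace.basisFun (Fin d) ℝ with hbb
  refine ⟨∑ i, p (bb i), Finset.sum_nonneg fun i _ => apply_nonneg _ _, fun x => ?_⟩
  have hx : x = ∑ i, ⟪(bb i : E d), x⟫ • (bb i : E d) := (bb.sum_repr' x).symm
  calc p x = p (∑ i, ⟪(bb i : E d), x⟫ • (bb i : E d)) := by rw [← hx]
    _ ≤ ∑ i, p (⟪(bb i : E d), x⟫ • (bb i : E d)) :=
        Finset.le_sum_of_subadditive p (map_zero p).le (map_add_le_add p) _ _
    _ ≤ ∑ i, p (bb i) * ‖x‖ := by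
        refine Finset.sum_le_sum fun i _ => ?_
        rw [map_smul_eq_mul]
        have h1 : ‖⟪(bb i : E d), x⟫‖ ≤ ‖x‖ := by
          calc ‖⟪(bb i : E d), x⟫‖ ≤ ‖(bb i : E d)‖ * ‖x‖ := norm_inner_le_norm _ _
            _ = ‖x‖ := by rw [bb.orthonormal.1 i, one_mul]
        calc ‖⟪(bb i : E d), x⟫‖ * p (bb i) ≤ ‖x‖ * p (bb i) :=
              mul_le_mul_of_nonneg_right h1 (apply_nonneg _ _)
          _ = p (bb i) * ‖x‖ := mul_comm _ _
    _ = (∑ i, p (bb i)) * ‖x‖ := (Finset.sum_mul _ _ _).symm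

lemma seminorm_lower' {d : ℕ} (hd : 1 ≤ d) (p : Seminorm ℝ (E d))
    (hpdef : ∀ x : E d, p x = 0 → x = 0) :
    ∃ m : ℝ, 0 < m ∧ ∀ x : E d, m * ‖x‖ ≤ p x := by
  obtain ⟨C, hC0, hC⟩ := seminorm_upper' p
  -- p is Lipschitz, hence continuous
  have hlip : ∀ a b : E d, |p a - p b| ≤ C * ‖a - b‖ := by
    intro a b
    have h1 : p a ≤ p (a - b) + p b := by simpa using map_add_le_add p (a - b) b
    have h2 : p b ≤ p (a - b) + p a := by
      have h3 : p b ≤ p (b - a) + p a := by simpa using map_add_le_add p (b - a) a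
      rwa [map_sub_rev] at h3
    have := hC (a - b)
    rw [abs_sub_le_iff]; constructor <;> linarith
  have hcont : Continuous (fun x : E d => p x) := by
    apply continuous_iff_continuousAt.2
    intro x
    apply Metric.continuousAt_iff.2
    intro ε hε
    by_cases hC0' : C = 0
    · exact ⟨1, one_pos, fun {a} _ => by
        have := hlip a x
        rw [hC0', zero_mul] at this
        simpa [Real.dist_eq] using lt_of_le_of_lt this hε⟩
    · have hCpos : 0 < C := lt_of_le_of_ne hC0 (Ne.symm hC0')
      refine ⟨ε / C, div_pos hε hCpos, fun {a} ha => ?_⟩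
      have h1 := hlip a x
      have h2 : ‖a - x‖ < ε / C := by rwa [dist_eq_norm] at ha
      calc dist (p a) (p x) = |p a - p x| := Real.dist_eq _ _
        _ ≤ C * ‖a - x‖ := h1
        _ < C * (ε / C) := by exact mul_lt_mul_of_pos_left h2 hCpos
        _ = ε := by field_simp
  have hne : (Metric.sphere (0 : E d) 1).Nonempty := by
    refine ⟨EuclideanSpace.single (⟨0, hd⟩ : Fin d) (1:ℝ), ?_⟩
    simp [EuclideanSpace.norm_single]
  obtain ⟨x₀, hx₀s, hx₀min⟩ :=
    (isCompact_sphere (0 : E d) 1).exists_isMinOn hne hcont.continuousOn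
  have hx₀norm : ‖x₀‖ = 1 := by simpa using hx₀s
  have hx₀ne : x₀ ≠ 0 := by intro h; rw [h] at hx₀norm; simp at hx₀norm
  have hm : 0 < p x₀ := by
    rcases lt_or_eq_of_le (apply_nonneg p x₀) with h | h
    · exact h
    · exact absurd (hpdef x₀ h.symm) hx₀ne
  refine ⟨p x₀, hm, fun x => ?_⟩
  by_cases hx : x = 0
  · simp [hx]
  · have hxn : 0 < ‖x‖ := norm_pos_iff.2 hx
    have hmem : (‖x‖⁻¹ • x) ∈ Metric.sphere (0 : E d) 1 := by
      simp [norm_smul, abs_of_pos (inv_pos.2 hxn), inv_mul_cancel₀ (ne_of_gt hxn)]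
    have h2 : p x₀ ≤ ‖x‖⁻¹ * p x := by
      have heq : p (‖x‖⁻¹ • x) = ‖x‖⁻¹ * p x := by
        rw [map_smul_eq_mul, Real.norm_eq_abs, abs_of_pos (inv_pos.2 hxn)]
      have h4 := hx₀min hmem
      simpa [heq] using h4
    calc p x₀ * ‖x‖ ≤ (‖x‖⁻¹ * p x) * ‖x‖ := mul_le_mul_of_nonneg_right h2 (le_of_lt hxn)
      _ = p x := by field_simp

lemma dualNorm_pos' {d : ℕ} (hd : 1 ≤ d) (p : Seminorm ℝ (E d))
    (hpdef : ∀ x : E d, p x = 0 → x = 0) {y : E d} (hy : y ≠ 0) :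
    0 < dualNorm p y := by
  obtain ⟨m, hm, hlow⟩ := seminorm_lower' hd p hpdef
  have hbdd : BddAbove ((fun x => ⟪y, x⟫) '' {x | p x ≤ 1}) := by
    refine ⟨‖y‖ * m⁻¹, ?_⟩
    rintro z ⟨x, hx, rfl⟩
    have hxn : ‖x‖ ≤ m⁻¹ := by
      have h1 : m * ‖x‖ ≤ 1 := le_trans (hlow x) hx
      calc ‖x‖ = m⁻¹ * (m * ‖x‖) := by field_simp
        _ ≤ m⁻¹ * 1 := mul_le_mul_of_nonneg_left h1 (inv_pos.2 hm).le
        _ = m⁻¹ := mul_one _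
    calc ⟪y, x⟫ ≤ ‖y‖ * ‖x‖ := real_inner_le_norm _ _
      _ ≤ ‖y‖ * m⁻¹ := mul_le_mul_of_nonneg_left hxn (norm_nonneg _)
  have hpy : 0 < p y := by
    rcases lt_or_eq_of_le (apply_nonneg p y) with h | h
    · exact h
    · exact absurd (hpdef y h.symm) hy
  have hmem : ((p y)⁻¹ • y) ∈ {x : E d | p x ≤ 1} := by
    have : p ((p y)⁻¹ • y) = |(p y)⁻¹| * p y := map_smul_eq_mul p _ _
    simp only [Set.mem_setOf_eq, this, abs_of_pos (inv_pos.2 hpy),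
      inv_mul_cancel₀ (ne_of_gt hpy), le_refl]
  have hval : ⟪y, (p y)⁻¹ • y⟫ = (p y)⁻¹ * ‖y‖ ^ 2 := by
    rw [real_inner_smul_right, real_inner_self_eq_norm_sq]
  have hle : ⟪y, (p y)⁻¹ • y⟫ ≤ dualNorm p y :=
    le_csSup hbdd ⟨_, hmem, rfl⟩
  have hypos : 0 < ‖y‖ := norm_pos_iff.2 hy
  have : 0 < (p y)⁻¹ * ‖y‖ ^ 2 := by positivity
  linarith [hval ▸ hle]

set_option maxHeartbeats 2000000 in
/-- Lemma `classifier-proxy-inner-product`: the prediction on the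
agent response is correct iff the proxy point is on the correct side: a correct
prediction gives `ℓ(A)·(⟪y,s(A,y,b)⟫+b) ≥ 0`, an incorrect one gives `≤ 0`. -/
theorem proxy_sign_of_prediction
    {d : ℕ} (hd : 1 ≤ d)
    (p : Seminorm ℝ (E d)) (hpdef : ∀ x : E d, p x = 0 → x = 0)
    (c : ℝ) (hc : 0 < c)
    (v : E d → E d) (hv0 : v 0 = 0)
    (hv : ∀ y : E d, y ≠ 0 → p (v y) ≤ 1 ∧ ⟪y, v y⟫ = dualNorm p y)
    (lbl : E d → ℝ) (hlbl : ∀ A : E d, lbl A = 1 ∨ lbl A = -1)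
    (y : E d) (b : ℝ) (A : E d) :
    (pred p c (resp p v c A y b) y b = lbl A →
      0 ≤ lbl A * (⟪y, proxy p v lbl c A y b⟫ + b)) ∧
    (pred p c (resp p v c A y b) y b ≠ lbl A →
      lbl A * (⟪y, proxy p v lbl c A y b⟫ + b) ≤ 0) := by
  by_cases hy : y = 0
  · subst hy
    have hD : dualNorm p (0 : E d) = 0 := dualNorm_zero' p
    have hresp : resp p v c A 0 b = A := by
      rw [resp, if_neg]; rintro ⟨h, -⟩; exact h rfl
    have hproxy : proxy p v lbl c A 0 b = A := by
      rw [proxy, if_neg, hresp]; rintro ⟨h, -⟩; exact h rfl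
    rw [hresp, hproxy, pred, hD]
    have hz : ⟪(0 : E d), A⟫ = (0 : ℝ) := inner_zero_left A
    rw [hz]
    have harg : (0 : ℝ) + b - 2 * 0 / c = b := by ring
    rw [harg]
    constructor
    · intro h
      rcases hlbl A with hl | hl <;> rw [hl] at h ⊢ <;> rw [sgn] at h <;>
          split_ifs at h with hs
      · linarith
      · norm_num at h
      · norm_num at h
      · linarith
    · intro h
      rcases hlbl A with hl | hl <;> rw [hl] at h ⊢ <;> rw [sgn] at h <;>
          split_ifs at h with hs
      · exact absurd rfl h
      · linarith
      · linarith
      · exact absurd rfl h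
  · have hD : 0 < dualNorm p y := dualNorm_pos' hd p hpdef hy
    set D := dualNorm p y with hDdef
    set t := (⟪y, A⟫ + b) / D with htdef
    have hDne : D ≠ 0 := ne_of_gt hD
    have htD : ⟪y, A⟫ + b = t * D := (div_mul_cancel₀ _ hDne).symm
    have hvy : ⟪y, v y⟫ = D := (hv y hy).2
    by_cases hcond : 0 ≤ t ∧ t < 2 / c
    · have hrespeq : resp p v c A y b = A + (2 / c - t) • v y := by
        rw [resp, ← hDdef, ← htdef, if_pos ⟨hy, hcond.1, hcond.2⟩]
      have hrinner : ⟪y, resp p v c A y b⟫ = ⟪y, A⟫ + (2 / c - t) * D := by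
        rw [hrespeq, inner_add_right, real_inner_smul_right, hvy]
      have hpred : pred p c (resp p v c A y b) y b = 1 := by
        rw [pred, ← hDdef, hrinner]
        have hzero : ⟪y, A⟫ + (2 / c - t) * D + b - 2 * D / c = 0 := by
          linear_combination htD
        rw [hzero, sgn, if_pos le_rfl]
      rcases hlbl A with hl | hl
      · have hproxyeq : proxy p v lbl c A y b = resp p v c A y b := by
          rw [proxy, if_neg]; rintro ⟨-, -, -, h4⟩; rw [hl] at h4; norm_num at h4
        rw [hproxyeq, hrinner, hpred, hl]
        constructor
        · intro _
          have hval : ⟪y, A⟫ + (2 / c - t) * D + b = 2 * D / c := by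
            linear_combination htD
          have h2 : (0:ℝ) < 2 * D / c := by positivity
          nlinarith [hval]
        · intro hne; exact absurd rfl hne
      · have hproxyeq : proxy p v lbl c A y b = A - t • v y := by
          rw [proxy, ← hDdef, ← htdef, if_pos ⟨hy, hcond.1, hcond.2, hl⟩]
        have hpinner : ⟪y, A - t • v y⟫ = ⟪y, A⟫ - t * D := by
          rw [inner_sub_right, real_inner_smul_right, hvy]
        constructor <;> intro _ <;> rw [hproxyeq, hpinner, hl] <;> nlinarith [htD]
    · have hrespeq : resp p v c A y b = A := by
        rw [resp, ← hDdef, ← htdef, if_neg]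
        rintro ⟨-, h1, h2⟩; exact hcond ⟨h1, h2⟩
      have hproxyeq : proxy p v lbl c A y b = A := by
        rw [proxy, ← hDdef, ← htdef, if_neg, hrespeq]
        rintro ⟨-, h1, h2, -⟩; exact hcond ⟨h1, h2⟩
      rw [hrespeq, hproxyeq, pred, ← hDdef]
      have harg : ⟪y, A⟫ + b - 2 * D / c = (t - 2 / c) * D := by
        linear_combination htD
      rw [harg]
      have h2c : (0:ℝ) < 2 / c := by positivity
      rcases (not_and_or.1 hcond) with hts | hts
      · have ht0 : t < 0 := lt_of_not_ge hts
        have hneg : (t - 2 / c) * D < 0 := mul_neg_of_neg_of_pos (by linarith) hD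
        constructor
        · intro h
          simp only [sgn, if_neg (not_le.2 hneg)] at h
          rw [← h, htD]; nlinarith [mul_pos (neg_pos.2 ht0) hD]
        · intro h
          simp only [sgn, if_neg (not_le.2 hneg)] at h
          rcases hlbl A with hl | hl
          · rw [hl, htD]; nlinarith [mul_pos (neg_pos.2 ht0) hD]
          · exact absurd hl.symm h
      · have ht2 : 2 / c ≤ t := le_of_not_gt hts
        have hnn : 0 ≤ (t - 2 / c) * D := mul_nonneg (by linarith) hD.le
        constructor
        · intro h
          simp only [sgn, if_pos hnn] at h
          rw [← h, htD]; nlinarith [mul_nonneg (le_trans h2c.le ht2) hD.le]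
        · intro h
          simp only [sgn, if_pos hnn] at h
          rcases hlbl A with hl | hl
          · exact absurd hl.symm h
          · rw [hl, htD]; nlinarith [mul_nonneg (le_trans h2c.le ht2) hD.le]
end
end

section
/- Let (y,b),(ȳ,b̄) ∈ ℝ^d×ℝ be such that ȳ^⊤v(y) ≥ 0. Then for every A ∈ ℝ^d, ℓ(A)·(ȳ^⊤ s(A,y,b) + b̄) ≥ ℓ(A)·(ȳ^⊤ A + b̄), i.e., the margin of the proxy point on the classifier (ȳ,b̄) is at least the margin of the true feature vector on the same classifier. -/
noncomputable section
open scoped Classical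
open scoped RealInnerProductSpace

/-- Lemma `proxy-inclusion`: if `⟪ȳ, v(y)⟫ ≥ 0` then for every
`A` the margin of the proxy point on the classifier `(ȳ,b̄)` is at least the margin
of the true feature vector on the same classifier. -/
theorem proxy_margin_ge_true_margin
    {d : ℕ} (hd : 1 ≤ d)
    (p : Seminorm ℝ (E d)) (hpdef : ∀ x : E d, p x = 0 → x = 0)
    (c : ℝ) (hc : 0 < c)
    (v : E d → E d) (hv0 : v 0 = 0)
    (hv : ∀ y : E d, y ≠ 0 → p (v y) ≤ 1 ∧ ⟪y, v y⟫ = dualNorm p y)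
    (lbl : E d → ℝ) (hlbl : ∀ A : E d, lbl A = 1 ∨ lbl A = -1)
    (y ybar : E d) (b bbar : ℝ)
    (halign : 0 ≤ ⟪ybar, v y⟫) :
    ∀ A : E d,
      lbl A * (⟪ybar, A⟫ + bbar) ≤ lbl A * (⟪ybar, proxy p v lbl c A y b⟫ + bbar) := by
  intro A
  unfold proxy resp
  set t := (⟪y, A⟫ + b) / dualNorm p y with ht
  by_cases h1 : y ≠ 0 ∧ 0 ≤ t ∧ t < 2 / c ∧ lbl A = -1
  · rw [if_pos h1]
    obtain ⟨hy, ht0, htc, hlA⟩ := h1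
    rw [hlA, inner_sub_right, real_inner_smul_right]
    nlinarith [mul_nonneg ht0 halign]
  · rw [if_neg h1]
    by_cases h2 : y ≠ 0 ∧ 0 ≤ t ∧ t < 2 / c
    · rw [if_pos h2]
      obtain ⟨hy, ht0, htc⟩ := h2
      have hlA : lbl A = 1 := by
        rcases hlbl A with h | h
        · exact h
        · exact absurd ⟨hy, ht0, htc, h⟩ h1
      have h2c : 0 ≤ 2 / c - t := by linarith
      rw [hlA, inner_add_right, real_inner_smul_right]
      nlinarith [mul_nonneg h2c halign]
    · rw [if_neg h2]
end
end

section
/- Let (y,b),(ȳ,b̄) ∈ ℝ^d×ℝ be such that ȳ^⊤v(y) ≥ 0, and suppose that for some ρ > 0 we have ℓ(A)·(ȳ^⊤A + b̄) ≥ ρ for all A ∈ 𝒜. Then ℓ(A)·(ȳ^⊤ s(A,y,b) + b̄) ≥ ρ for all A ∈ 𝒜; i.e., the proxy points are separable by the classifier x ↦ sign(ȳ^⊤x + b̄) with the same margin guarantee ρ. -/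
noncomputable section
open scoped Classical
open scoped RealInnerProductSpace

/-- Corollary `proxy-inclusion`: if `⟪ȳ, v(y)⟫ ≥ 0` and the
classifier `(ȳ,b̄)` separates `𝒜` with margin `ρ > 0`, then it also separates all
proxy points generated with classifier `(y,b)` with the same margin `ρ`. -/
theorem proxy_points_separable
    {d : ℕ} (hd : 1 ≤ d)
    (p : Seminorm ℝ (E d)) (hpdef : ∀ x : E d, p x = 0 → x = 0)
    (c : ℝ) (hc : 0 < c)
    (v : E d → E d) (hv0 : v 0 = 0)
    (hv : ∀ y : E d, y ≠ 0 → p (v y) ≤ 1 ∧ ⟪y, v y⟫ = dualNorm p y)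
    (lbl : E d → ℝ) (hlbl : ∀ A : E d, lbl A = 1 ∨ lbl A = -1)
    (𝒜 : Set (E d)) (y ybar : E d) (b bbar : ℝ)
    (halign : 0 ≤ ⟪ybar, v y⟫)
    (ρ : ℝ) (hρ : 0 < ρ)
    (hsep : ∀ A ∈ 𝒜, ρ ≤ lbl A * (⟪ybar, A⟫ + bbar)) :
    ∀ A ∈ 𝒜, ρ ≤ lbl A * (⟪ybar, proxy p v lbl c A y b⟫ + bbar) := by
  intro A hA
  have hsA := hsep A hA
  unfold proxy resp
  split_ifs with h1 h2
  · obtain ⟨hy, ht0, htc, hl⟩ := h1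
    rw [inner_sub_right, inner_smul_right]
    have : 0 ≤ ((⟪y, A⟫ + b) / dualNorm p y) * ⟪ybar, v y⟫ :=
      mul_nonneg ht0 halign
    rw [hl] at hsA ⊢
    nlinarith
  · obtain ⟨hy, ht0, htc⟩ := h2
    have hl : lbl A = 1 := by
      rcases hlbl A with h | h
      · exact h
      · exact absurd ⟨hy, ht0, htc, h⟩ h1
    have hs : 0 ≤ 2 / c - (⟪y, A⟫ + b) / dualNorm p y := by linarith
    rw [inner_add_right, inner_smul_right]
    have : 0 ≤ (2 / c - (⟪y, A⟫ + b) / dualNorm p y) * ⟪ybar, v y⟫ :=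
      mul_nonneg hs halign
    rw [hl] at hsA ⊢
    nlinarith
  · exact hsA
end
end

section
/- Let S⁺, S⁻ ⊆ ℝ^d be nonempty compact sets such that d̃ := max{h(y,b;S⁺,S⁻) : ‖y‖_* ≤ 1, b ∈ ℝ} > 0, and let (ỹ,b̃) be an optimal solution. Then there exist x̃⁺ ∈ conv(S⁺) and x̃⁻ ∈ conv(S⁻) such that ỹ^⊤(x̃⁺ − x̃⁻) = ‖x̃⁺ − x̃⁻‖·‖ỹ‖_* and d̃·‖ỹ‖_* = ỹ^⊤x̃⁺ + b̃ = −ỹ^⊤x̃⁻ − b̃; in particular d̃ = ‖x̃⁺ − x̃⁻‖/2 and b̃ = −ỹ^⊤(x̃⁺ + x̃⁻)/2. Furthermore, assuming both ‖·‖ and ‖·‖_* are strictly convex, if (ȳ,b̄) ∈ ℝ^d×ℝ satisfies h(ȳ,b̄;S⁺,S⁻) ≥ d̄ for some d̄ > 0, then ȳ^⊤v(ỹ) ≥ d̄/d̃ > 0. -/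
noncomputable section
open scoped Classical
open scoped RealInnerProductSpace

/-- Margin function `h(y,b;S⁺,S⁻)`. -/
def marginFn {d : ℕ} (Sp Sm : Set (E d)) (y : E d) (b : ℝ) : ℝ :=
  min (sInf ((fun x => ⟪y, x⟫ + b) '' Sp)) (sInf ((fun x => -⟪y, x⟫ - b) '' Sm))

/-- Strict convexity of a norm-like function: the triangle inequality is strict
on non-collinear vectors. -/
def StrictlyConvexFn {d : ℕ} (N : E d → ℝ) : Prop :=
  ∀ w z : E d, (¬ ∃ t : ℝ, w = t • z ∨ z = t • w) →
    ∀ β : ℝ, 0 < β → β < 1 →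
      N (β • w + (1 - β) • z) < β * N w + (1 - β) * N z


open Pointwise

section Helpers

lemma isCompact_convexHull' {d : ℕ} {s : Set (E d)} (hs : IsCompact s) (hne : s.Nonempty) :
    IsCompact (convexHull ℝ s) := by
  obtain ⟨s₀, hs₀⟩ := hne
  set n := d + 1 with hn
  set f : (Fin n → ℝ) × (Fin n → E d) → E d := fun q => ∑ i, q.1 i • q.2 i with hf
  have hfc : Continuous f := by
    apply continuous_finset_sum
    intro i _
    exact ((continuous_apply i).comp continuous_fst).smul
      ((continuous_apply i).comp continuous_snd)
  have hT : IsCompact ((stdSimplex ℝ (Fin n)) ×ˢ (Set.univ.pi fun _ : Fin n => s)) :=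
    (isCompact_stdSimplex _ _).prod (isCompact_univ_pi fun _ => hs)
  have himg : f '' ((stdSimplex ℝ (Fin n)) ×ˢ (Set.univ.pi fun _ : Fin n => s))
      = convexHull ℝ s := by
    apply Set.Subset.antisymm
    · rintro x ⟨⟨w, z⟩, ⟨hw, hz⟩, rfl⟩
      exact (convex_convexHull ℝ s).sum_mem (fun i _ => hw.1 i) hw.2
        (fun i _ => subset_convexHull ℝ s (hz i (Set.mem_univ i)))
    · intro x hx
      obtain ⟨ι, hι, z, w, hzs, hai, hwpos, hwsum, hwx⟩ :=
        eq_pos_convex_span_of_mem_convexHull hx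
      letI := hι
      have hcard : Fintype.card ι ≤ n := by
        have h1 := hai.card_le_finrank_succ
        have h2 : Module.finrank ℝ ↥(vectorSpan ℝ (Set.range z)) ≤ d :=
          le_trans (Submodule.finrank_le _) (le_of_eq finrank_euclideanSpace_fin)
        omega
      obtain ⟨g⟩ : Nonempty (ι ↪ Fin n) :=
        Function.Embedding.nonempty_of_card_le (by simpa using hcard)
      set w' : Fin n → ℝ := fun j => if h : ∃ i, g i = j then w h.choose else 0 with hw'
      set z' : Fin n → E d := fun j => if h : ∃ i, g i = j then z h.choose else s₀ with hz'
      have hkey : ∀ i : ι, w' (g i) = w i ∧ z' (g i) = z i := by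
        intro i
        have h : ∃ i', g i' = g i := ⟨i, rfl⟩
        have hch : h.choose = i := g.injective h.choose_spec
        constructor <;> simp [hw', hz', dif_pos h, hch]
      have key : ∀ {M : Type} [AddCommMonoid M] (F : Fin n → M),
          (∀ j, (¬ ∃ i, g i = j) → F j = 0) → ∑ j, F j = ∑ i, F (g i) := by
        intro M _ F h0
        rw [← Finset.sum_map Finset.univ g F]
        exact (Finset.sum_subset (Finset.subset_univ _) (fun j _ hj =>
          h0 j (by simpa [Finset.mem_map] using hj))).symm
      refine ⟨(w', z'), ⟨⟨?_, ?_⟩, ?_⟩, ?_⟩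
      · intro j; by_cases h : ∃ i, g i = j
        · simp only [hw', dif_pos h]; exact (hwpos _).le
        · simp [hw', dif_neg h]
      · rw [key w' (fun j hj => by simp [hw', dif_neg hj])]
        rw [← hwsum]
        exact Finset.sum_congr rfl fun i _ => (hkey i).1
      · intro j _
        by_cases h : ∃ i, g i = j
        · simp only [hz', dif_pos h]; exact hzs ⟨_, rfl⟩
        · simp [hz', dif_neg h, hs₀]
      · show ∑ j, w' j • z' j = x
        rw [key (fun j => w' j • z' j) (fun j hj => by simp [hw', dif_neg hj])]
        rw [← hwx]
        exact Finset.sum_congr rfl fun i _ => by rw [(hkey i).1, (hkey i).2]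
  rw [← himg]
  exact hT.image hfc


variable {d : ℕ}

lemma pcont (p : Seminorm ℝ (E d)) : Continuous p :=
  continuousOn_univ.mp (p.convexOn.continuousOn isOpen_univ)

lemma seminorm_lb (hd : 1 ≤ d) (p : Seminorm ℝ (E d)) (hpdef : ∀ x : E d, p x = 0 → x = 0) :
    ∃ c : ℝ, 0 < c ∧ ∀ x : E d, c * ‖x‖ ≤ p x := by
  have hsne : (Metric.sphere (0 : E d) 1).Nonempty := by
    refine ⟨EuclideanSpace.single ⟨0, hd⟩ (1 : ℝ), ?_⟩
    simp [EuclideanSpace.norm_single]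
  obtain ⟨x₀, hx₀, hmin⟩ := (isCompact_sphere (0 : E d) 1).exists_isMinOn hsne
    (pcont p).continuousOn
  have hx₀n : ‖x₀‖ = 1 := by simpa using hx₀
  have hc : 0 < p x₀ := by
    rcases (apply_nonneg p x₀).lt_or_eq with h | h
    · exact h
    · exfalso; have := hpdef x₀ h.symm; rw [this] at hx₀n; simp at hx₀n
  refine ⟨p x₀, hc, fun x => ?_⟩
  rcases eq_or_ne x 0 with rfl | hx
  · simp
  · have hxn : 0 < ‖x‖ := norm_pos_iff.mpr hx
    have hu : (‖x‖⁻¹ • x) ∈ Metric.sphere (0 : E d) 1 := by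
      simp [norm_smul, abs_of_nonneg (inv_nonneg.mpr hxn.le), inv_mul_cancel₀ hxn.ne']
    have hm : p x₀ ≤ p (‖x‖⁻¹ • x) := hmin hu
    have h2 : p (‖x‖⁻¹ • x) = ‖x‖⁻¹ * p x := by
      rw [map_smul_eq_mul]; simp [abs_of_nonneg (inv_nonneg.mpr hxn.le)]
    rw [h2] at hm
    calc p x₀ * ‖x‖ ≤ (‖x‖⁻¹ * p x) * ‖x‖ := mul_le_mul_of_nonneg_right hm (norm_nonneg x)
    _ = p x := by field_simp

lemma dual_bddAbove (hd : 1 ≤ d) (p : Seminorm ℝ (E d)) (hpdef : ∀ x : E d, p x = 0 → x = 0)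
    (y : E d) : BddAbove ((fun x => ⟪y, x⟫) '' {x | p x ≤ 1}) := by
  obtain ⟨c, hc, hcb⟩ := seminorm_lb hd p hpdef
  refine ⟨‖y‖ * c⁻¹, ?_⟩
  rintro z ⟨x, hx, rfl⟩
  have h1 : ⟪y, x⟫ ≤ ‖y‖ * ‖x‖ := real_inner_le_norm y x
  have h2 : ‖x‖ ≤ c⁻¹ := by
    have := (hcb x).trans hx
    rw [← le_div_iff₀' hc] at this; simpa [one_div] using this
  exact h1.trans (mul_le_mul_of_nonneg_left h2 (norm_nonneg y))

lemma dual_set_nonempty (p : Seminorm ℝ (E d)) (y : E d) :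
    ((fun x => ⟪y, x⟫) '' {x | p x ≤ 1}).Nonempty :=
  ⟨0, 0, by simp, by simp⟩

lemma dual_nonneg (hd : 1 ≤ d) (p : Seminorm ℝ (E d)) (hpdef : ∀ x : E d, p x = 0 → x = 0)
    (y : E d) : 0 ≤ dualNorm p y := by
  have := le_csSup (dual_bddAbove hd p hpdef y) (show (0:ℝ) ∈ _ from ⟨0, by simp, by simp⟩)
  simpa [dualNorm] using this

lemma inner_le_dual (hd : 1 ≤ d) (p : Seminorm ℝ (E d)) (hpdef : ∀ x : E d, p x = 0 → x = 0)
    (y x : E d) (hx : p x ≤ 1) : ⟪y, x⟫ ≤ dualNorm p y :=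
  le_csSup (dual_bddAbove hd p hpdef y) ⟨x, hx, rfl⟩

lemma dual_le (p : Seminorm ℝ (E d)) (y : E d) {M : ℝ}
    (h : ∀ x : E d, p x ≤ 1 → ⟪y, x⟫ ≤ M) : dualNorm p y ≤ M :=
  csSup_le (dual_set_nonempty p y) (by rintro z ⟨x, hx, rfl⟩; exact h x hx)

/-- duality inequality -/
lemma inner_le_dual_mul (hd : 1 ≤ d) (p : Seminorm ℝ (E d)) (hpdef : ∀ x : E d, p x = 0 → x = 0)
    (y x : E d) : ⟪y, x⟫ ≤ dualNorm p y * p x := by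
  rcases (apply_nonneg p x).lt_or_eq with h | h
  · have hx' : p ((p x)⁻¹ • x) ≤ 1 := by
      rw [map_smul_eq_mul]
      rw [Real.norm_eq_abs, abs_of_nonneg (inv_nonneg.mpr h.le),
        inv_mul_cancel₀ h.ne']
    have := inner_le_dual hd p hpdef y _ hx'
    rw [real_inner_smul_right] at this
    calc ⟪y, x⟫ = p x * ((p x)⁻¹ * ⟪y, x⟫) := by field_simp
    _ ≤ p x * dualNorm p y := mul_le_mul_of_nonneg_left this h.le
    _ = dualNorm p y * p x := mul_comm _ _
  · have hx0 : x = 0 := hpdef x h.symm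
    simp [hx0, ← h]

lemma dual_pos (hd : 1 ≤ d) (p : Seminorm ℝ (E d)) (hpdef : ∀ x : E d, p x = 0 → x = 0)
    {y : E d} (hy : y ≠ 0) : 0 < dualNorm p y := by
  have hpy : 0 < p y := by
    rcases (apply_nonneg p y).lt_or_eq with h | h
    · exact h
    · exact absurd (hpdef y h.symm) hy
  have hx' : p ((p y)⁻¹ • y) ≤ 1 := by
    rw [map_smul_eq_mul]
    rw [Real.norm_eq_abs, abs_of_nonneg (inv_nonneg.mpr hpy.le),
      inv_mul_cancel₀ hpy.ne']
  have h1 := inner_le_dual hd p hpdef y _ hx'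
  rw [real_inner_smul_right, real_inner_self_eq_norm_sq] at h1
  have : 0 < (p y)⁻¹ * (‖y‖ * ‖y‖) := by
    have := norm_pos_iff.mpr hy
    positivity
  calc (0:ℝ) < (p y)⁻¹ * (‖y‖ * ‖y‖) := this
  _ ≤ dualNorm p y := by
      have h2 : ‖y‖ ^ 2 = ‖y‖ * ‖y‖ := sq ‖y‖
      rw [← h2]; exact h1

lemma dual_smul (hd : 1 ≤ d) (p : Seminorm ℝ (E d)) (hpdef : ∀ x : E d, p x = 0 → x = 0)
    (y : E d) {a : ℝ} (ha : 0 < a) : dualNorm p (a • y) = a * dualNorm p y := by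
  have le1 : ∀ (b : ℝ) (z : E d), 0 < b → dualNorm p (b • z) ≤ b * dualNorm p z := by
    intro b z hb
    refine dual_le p _ (fun x hx => ?_)
    rw [real_inner_smul_left]
    exact mul_le_mul_of_nonneg_left (inner_le_dual hd p hpdef z x hx) hb.le
  refine le_antisymm (le1 a y ha) ?_
  have := le1 a⁻¹ (a • y) (inv_pos.mpr ha)
  rw [smul_smul, inv_mul_cancel₀ ha.ne', one_smul] at this
  calc a * dualNorm p y ≤ a * (a⁻¹ * dualNorm p (a • y)) :=
        mul_le_mul_of_nonneg_left this ha.le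
  _ = dualNorm p (a • y) := by field_simp

lemma dual_zero (p : Seminorm ℝ (E d)) : dualNorm p 0 = 0 := by
  have : ((fun x => ⟪(0 : E d), x⟫) '' {x | p x ≤ 1}) = {0} := by
    apply Set.Subset.antisymm
    · rintro z ⟨x, _, rfl⟩; simp
    · rintro z rfl; exact ⟨0, by simp, by simp⟩
  rw [dualNorm, this, csSup_singleton]

variable {d : ℕ}

lemma margin_forall_pos {Sp Sm : Set (E d)} (hSpc : IsCompact Sp) {y : E d} {b m : ℝ}
    (h : m ≤ marginFn Sp Sm y b) : ∀ x ∈ convexHull ℝ Sp, m ≤ ⟪y, x⟫ + b := by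
  have hc : Continuous fun x : E d => ⟪y, x⟫ + b :=
    (continuous_const.inner continuous_id).add continuous_const
  have hbb : BddBelow ((fun x => ⟪y, x⟫ + b) '' Sp) := (hSpc.image hc).bddBelow
  have h1 : ∀ x ∈ Sp, m ≤ ⟪y, x⟫ + b := fun x hx =>
    le_trans (h.trans (min_le_left _ _)) (csInf_le hbb ⟨x, hx, rfl⟩)
  have hconv : Convex ℝ {x : E d | m - b ≤ ⟪y, x⟫} :=
    convex_halfSpace_ge
      ⟨fun u v => inner_add_right _ _ _, fun c u => real_inner_smul_right _ _ _⟩ _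
  have hsub : Sp ⊆ {x : E d | m - b ≤ ⟪y, x⟫} := fun x hx => by
    have := h1 x hx; simp only [Set.mem_setOf_eq]; linarith
  intro x hx
  have := convexHull_min hsub hconv hx
  simp only [Set.mem_setOf_eq] at this; linarith

lemma margin_forall_neg {Sp Sm : Set (E d)} (hSmc : IsCompact Sm) {y : E d} {b m : ℝ}
    (h : m ≤ marginFn Sp Sm y b) : ∀ x ∈ convexHull ℝ Sm, ⟪y, x⟫ + b ≤ -m := by
  have hc : Continuous fun x : E d => -⟪y, x⟫ - b :=
    ((continuous_const.inner continuous_id).neg).sub continuous_const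
  have hbb : BddBelow ((fun x => -⟪y, x⟫ - b) '' Sm) := (hSmc.image hc).bddBelow
  have h1 : ∀ x ∈ Sm, m ≤ -⟪y, x⟫ - b := fun x hx =>
    le_trans (h.trans (min_le_right _ _)) (csInf_le hbb ⟨x, hx, rfl⟩)
  have hconv : Convex ℝ {x : E d | ⟪y, x⟫ ≤ -m - b} :=
    convex_halfSpace_le
      ⟨fun u v => inner_add_right _ _ _, fun c u => real_inner_smul_right _ _ _⟩ _
  have hsub : Sm ⊆ {x : E d | ⟪y, x⟫ ≤ -m - b} := fun x hx => by
    have := h1 x hx; simp only [Set.mem_setOf_eq]; linarith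
  intro x hx
  have := convexHull_min hsub hconv hx
  simp only [Set.mem_setOf_eq] at this; linarith

lemma marginFn_ge {Sp Sm : Set (E d)} (hSp : Sp.Nonempty) (hSm : Sm.Nonempty)
    {y : E d} {b m : ℝ} (h1 : ∀ x ∈ Sp, m ≤ ⟪y, x⟫ + b) (h2 : ∀ x ∈ Sm, m ≤ -⟪y, x⟫ - b) :
    m ≤ marginFn Sp Sm y b :=
  le_min (le_csInf (hSp.image _) (by rintro z ⟨x, hx, rfl⟩; exact h1 x hx))
    (le_csInf (hSm.image _) (by rintro z ⟨x, hx, rfl⟩; exact h2 x hx))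

end Helpers

set_option maxHeartbeats 2000000 in
theorem margin_prod
    {d : ℕ} (hd : 1 ≤ d)
    (p : Seminorm ℝ (E d)) (hpdef : ∀ x : E d, p x = 0 → x = 0)
    (v : E d → E d) (hv0 : v 0 = 0)
    (hv : ∀ y : E d, y ≠ 0 → p (v y) ≤ 1 ∧ ⟪y, v y⟫ = dualNorm p y)
    (Sp Sm : Set (E d)) (hSp : Sp.Nonempty) (hSm : Sm.Nonempty)
    (hSpc : IsCompact Sp) (hSmc : IsCompact Sm)
    (dtil : ℝ) (hdtil : 0 < dtil)
    (ty : E d) (tb : ℝ)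
    (htysol : dualNorm p ty ≤ 1 ∧ marginFn Sp Sm ty tb = dtil ∧
      ∀ (y : E d) (b : ℝ), dualNorm p y ≤ 1 → marginFn Sp Sm y b ≤ dtil) :
    (∃ xp ∈ convexHull ℝ Sp, ∃ xm ∈ convexHull ℝ Sm,
      ⟪ty, xp - xm⟫ = p (xp - xm) * dualNorm p ty ∧
      dtil * dualNorm p ty = ⟪ty, xp⟫ + tb ∧
      dtil * dualNorm p ty = -⟪ty, xm⟫ - tb ∧
      dtil = p (xp - xm) / 2 ∧
      tb = -(⟪ty, xp + xm⟫) / 2) ∧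
    ((StrictlyConvexFn (fun x => (p x : ℝ)) ∧ StrictlyConvexFn (dualNorm p)) →
      ∀ (ybar : E d) (bbar dbar : ℝ), 0 < dbar → dbar ≤ marginFn Sp Sm ybar bbar →
        dbar / dtil ≤ ⟪ybar, v ty⟫ ∧ 0 < dbar / dtil) := by
  classical
  obtain ⟨hty1, htymar, htyopt⟩ := htysol
  have hKp := isCompact_convexHull' hSpc hSp
  have hKm := isCompact_convexHull' hSmc hSm
  obtain ⟨a₀, ha₀⟩ := id hSp
  obtain ⟨b₀, hb₀⟩ := id hSm
  -- minimize p (a - b) over the product of hulls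
  have hTc : IsCompact ((convexHull ℝ Sp) ×ˢ (convexHull ℝ Sm)) := hKp.prod hKm
  have hTne : ((convexHull ℝ Sp) ×ˢ (convexHull ℝ Sm)).Nonempty :=
    ⟨(a₀, b₀), subset_convexHull ℝ Sp ha₀, subset_convexHull ℝ Sm hb₀⟩
  have hFc : ContinuousOn (fun z : E d × E d => p (z.1 - z.2))
      ((convexHull ℝ Sp) ×ˢ (convexHull ℝ Sm)) :=
    ((pcont p).comp (continuous_fst.sub continuous_snd)).continuousOn
  obtain ⟨z, hzT, hzmin⟩ := hTc.exists_isMinOn hTne hFc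
  have hzp : z.1 ∈ convexHull ℝ Sp := hzT.1
  have hzm : z.2 ∈ convexHull ℝ Sm := hzT.2
  set xp := z.1 with hxp
  set xm := z.2 with hxm
  set δ := p (xp - xm) with hδ
  have hδmin : ∀ a ∈ convexHull ℝ Sp, ∀ b ∈ convexHull ℝ Sm, δ ≤ p (a - b) := by
    intro a ha b hb
    exact hzmin (Set.mk_mem_prod ha hb)
  have hpos := margin_forall_pos hSpc (le_of_eq htymar.symm)
  have hneg := margin_forall_neg hSmc (le_of_eq htymar.symm)
  have h2d : 2 * dtil ≤ ⟪ty, xp - xm⟫ := by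
    have h1 := hpos xp hzp
    have h2 := hneg xm hzm
    rw [inner_sub_right]; linarith
  have hdu : ⟪ty, xp - xm⟫ ≤ dualNorm p ty * δ := inner_le_dual_mul hd p hpdef ty _
  have hδnn : 0 ≤ δ := apply_nonneg p _
  have hDtynn : 0 ≤ dualNorm p ty := dual_nonneg hd p hpdef ty
  have hδ2d : 2 * dtil ≤ δ := by
    nlinarith [mul_le_mul_of_nonneg_right hty1 hδnn]
  have hδpos : 0 < δ := by linarith
  -- separation
  set B := {x : E d | p x < δ} with hB
  have hBopen : IsOpen B := isOpen_lt (pcont p) continuous_const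
  have hBconv : Convex ℝ B := by
    have h := p.convexOn.convex_lt δ
    simpa [Set.sep_univ] using h
  set K := (convexHull ℝ Sp) - (convexHull ℝ Sm) with hK
  have hKconv : Convex ℝ K := (convex_convexHull ℝ Sp).sub (convex_convexHull ℝ Sm)
  have hdisj : Disjoint B K := by
    rw [Set.disjoint_left]
    intro x hxB hxK
    obtain ⟨a, ha, b, hb, rfl⟩ := Set.mem_sub.mp hxK
    exact absurd (hδmin a ha b hb) (not_le.mpr hxB)
  obtain ⟨f, u, hfB, hfK⟩ := geometric_hahn_banach_open hBconv hBopen hKconv hdisj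
  set y := (InnerProductSpace.toDual ℝ (E d)).symm f with hy
  have hyf : ∀ x : E d, ⟪y, x⟫ = f x := fun x => InnerProductSpace.toDual_symm_apply
  have hu0 : 0 < u := by
    have h0 : (0 : E d) ∈ B := by simpa [hB] using hδpos
    have := hfB 0 h0
    simpa using this
  have hKu : ∀ x ∈ K, u ≤ ⟪y, x⟫ := fun x hx => by rw [hyf]; exact hfK x hx
  have hxpK : xp - xm ∈ K := Set.sub_mem_sub hzp hzm
  have hyne : y ≠ 0 := by
    intro h0
    have := hKu _ hxpK
    rw [h0] at this
    simp only [inner_zero_left] at this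
    linarith
  have hDy : 0 < dualNorm p y := dual_pos hd p hpdef hyne
  have hdb : δ * dualNorm p y ≤ u := by
    have hkey : ∀ x : E d, p x ≤ 1 → δ * ⟪y, x⟫ ≤ u := by
      intro x hx
      by_contra hlt
      push_neg at hlt
      set A := δ * ⟪y, x⟫ with hA
      have hApos : 0 < A := lt_trans hu0 hlt
      set t := (u + A) / (2 * A) with ht
      have ht0 : 0 < t := by positivity
      have ht1 : t < 1 := by rw [div_lt_one (by positivity)]; linarith
      have hpx : ((t * δ) • x) ∈ B := by
        show p ((t * δ) • x) < δ
        rw [map_smul_eq_mul, Real.norm_eq_abs, abs_of_pos (by positivity)]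
        calc t * δ * p x ≤ t * δ * 1 := by
              apply mul_le_mul_of_nonneg_left hx (by positivity)
        _ < δ := by nlinarith
      have hlt2 := hfB _ hpx
      rw [← hyf, real_inner_smul_right] at hlt2
      have htA : t * A = (u + A) / 2 := by
        rw [ht]; field_simp
      have : t * δ * ⟪y, x⟫ = t * A := by rw [hA]; ring
      rw [this, htA] at hlt2
      linarith
    have h2 := dual_le p y (M := u / δ) (fun x hx => by
      rw [le_div_iff₀ hδpos]
      have := hkey x hx
      linarith)
    calc δ * dualNorm p y ≤ δ * (u / δ) := mul_le_mul_of_nonneg_left h2 hδnn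
    _ = u := by field_simp
  set Dy := dualNorm p y with hDydef
  set y' := Dy⁻¹ • y with hy'
  have hDy' : dualNorm p y' = 1 := by
    rw [hy', dual_smul hd p hpdef y (inv_pos.mpr hDy)]
    field_simp
    exact hDydef.symm
  have hsep : ∀ a ∈ Sp, ∀ b ∈ Sm, ⟪y', b⟫ + δ ≤ ⟪y', a⟫ := by
    intro a ha b hb
    have hK' : a - b ∈ K :=
      Set.sub_mem_sub (subset_convexHull ℝ Sp ha) (subset_convexHull ℝ Sm hb)
    have h1 := hKu _ hK'
    have h3 : δ ≤ ⟪y', a - b⟫ := by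
      rw [hy', real_inner_smul_left]
      calc δ = Dy⁻¹ * (δ * Dy) := by field_simp
      _ ≤ Dy⁻¹ * ⟪y, a - b⟫ :=
          mul_le_mul_of_nonneg_left (by linarith) (inv_nonneg.mpr hDy.le)
    rw [inner_sub_right] at h3
    linarith
  have hyc : Continuous fun x : E d => ⟪y', x⟫ := continuous_const.inner continuous_id
  have hbbp : BddBelow ((fun x : E d => ⟪y', x⟫) '' Sp) := (hSpc.image hyc).bddBelow
  have hbam : BddAbove ((fun x : E d => ⟪y', x⟫) '' Sm) := (hSmc.image hyc).bddAbove
  set ia := sInf ((fun x : E d => ⟪y', x⟫) '' Sp) with hia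
  set sm := sSup ((fun x : E d => ⟪y', x⟫) '' Sm) with hsm
  have hgap : ∀ a ∈ Sp, sm + δ ≤ ⟪y', a⟫ := by
    intro a ha
    have h1 : sm ≤ ⟪y', a⟫ - δ := csSup_le (hSm.image _) (by
      rintro w ⟨b₁, hb₁, rfl⟩
      have := hsep a ha b₁ hb₁
      linarith)
    linarith
  set b' := -(ia + sm) / 2 with hb'
  have hmar' : δ / 2 ≤ marginFn Sp Sm y' b' := by
    refine marginFn_ge hSp hSm (fun x hx => ?_) (fun x hx => ?_)
    · have h1 : ia ≤ ⟪y', x⟫ := csInf_le hbbp ⟨x, hx, rfl⟩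
      have h2 : sm + δ ≤ ia := le_csInf (hSp.image _) (by
        rintro w ⟨a₁, ha₁, rfl⟩
        exact hgap a₁ ha₁)
      rw [hb']; linarith
    · have h1 : ⟪y', x⟫ ≤ sm := le_csSup hbam ⟨x, hx, rfl⟩
      have h2 : sm + δ ≤ ia := le_csInf (hSp.image _) (by
        rintro w ⟨a₁, ha₁, rfl⟩
        exact hgap a₁ ha₁)
      rw [hb']; linarith
  have hopt' := htyopt y' b' (le_of_eq hDy')
  have hδle : δ ≤ 2 * dtil := by linarith
  have hδeq : δ = 2 * dtil := le_antisymm hδle hδ2d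
  have hDty1 : dualNorm p ty = 1 := by
    refine le_antisymm hty1 ?_
    have h1 : 1 * (2 * dtil) ≤ dualNorm p ty * (2 * dtil) := by
      rw [one_mul, ← hδeq]; linarith
    exact le_of_mul_le_mul_right h1 (by linarith)
  have hinner : ⟪ty, xp - xm⟫ = 2 * dtil := by
    refine le_antisymm ?_ h2d
    calc ⟪ty, xp - xm⟫ ≤ dualNorm p ty * δ := hdu
    _ = 2 * dtil := by rw [hDty1, hδeq, one_mul]
  have hA1 : dtil ≤ ⟪ty, xp⟫ + tb := hpos xp hzp
  have hA2 : ⟪ty, xm⟫ + tb ≤ -dtil := hneg xm hzm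
  have hsum : (⟪ty, xp⟫ + tb) + (-⟪ty, xm⟫ - tb) = 2 * dtil := by
    rw [inner_sub_right] at hinner; linarith
  have he1 : ⟪ty, xp⟫ + tb = dtil := by linarith
  have he2 : -⟪ty, xm⟫ - tb = dtil := by linarith
  constructor
  · refine ⟨xp, hzp, xm, hzm, ?_, ?_, ?_, ?_, ?_⟩
    · rw [hDty1, mul_one, ← hδ]
      rw [hinner, hδeq]
    · rw [hDty1, mul_one]; linarith
    · rw [hDty1, mul_one]; linarith
    · rw [← hδ, hδeq]; ring
    · rw [inner_add_right]; linarith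
  · rintro ⟨hscp, -⟩ ybar bbar dbar hdbar hmar
    have htyne : ty ≠ 0 := by
      intro h0
      rw [h0, dual_zero] at hDty1
      norm_num at hDty1
    obtain ⟨hvle, hvinner⟩ := hv ty htyne
    rw [hDty1] at hvinner
    have h2dpos : 0 < 2 * dtil := by linarith
    set w := (2 * dtil)⁻¹ • (xp - xm) with hwdef
    have hpw : p w = 1 := by
      rw [hwdef, map_smul_eq_mul, Real.norm_eq_abs, abs_of_pos (inv_pos.mpr h2dpos), ← hδ,
        hδeq, inv_mul_cancel₀ h2dpos.ne']
    have hiw : ⟪ty, w⟫ = 1 := by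
      rw [hwdef, real_inner_smul_right, hinner, inv_mul_cancel₀ h2dpos.ne']
    have hveq : v ty = w := by
      by_contra hne
      have hnc : ¬ ∃ t : ℝ, v ty = t • w ∨ w = t • v ty := by
        rintro ⟨t, h | h⟩
        · have ht' : t = 1 := by
            have h1 := hvinner
            rw [h, real_inner_smul_right, hiw, mul_one] at h1
            exact h1
          exact hne (by rw [h, ht', one_smul])
        · have ht' : t = 1 := by
            have h1 := hiw
            rw [h, real_inner_smul_right, hvinner, mul_one] at h1
            exact h1
          exact hne (by rw [h, ht', one_smul])
      have hlt := hscp (v ty) w hnc (1/2) (by norm_num) (by norm_num)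
      have hple : p ((1/2 : ℝ) • v ty + (1 - 1/2 : ℝ) • w) < 1 := by
        have hb1 : (1:ℝ)/2 * p (v ty) + (1 - 1/2) * p w ≤ 1 := by
          rw [hpw]; norm_num; linarith
        exact lt_of_lt_of_le hlt hb1
      have him : ⟪ty, (1/2 : ℝ) • v ty + (1 - 1/2 : ℝ) • w⟫ = 1 := by
        rw [inner_add_right, real_inner_smul_right, real_inner_smul_right, hvinner, hiw]
        norm_num
      have hdual := inner_le_dual_mul hd p hpdef ty ((1/2 : ℝ) • v ty + (1 - 1/2 : ℝ) • w)
      rw [him, hDty1, one_mul] at hdual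
      linarith
    have hp1 := margin_forall_pos hSpc hmar
    have hp2 := margin_forall_neg hSmc hmar
    have hub : 2 * dbar ≤ ⟪ybar, xp - xm⟫ := by
      have h1 := hp1 xp hzp
      have h2 := hp2 xm hzm
      rw [inner_sub_right]; linarith
    have hfin : dbar / dtil ≤ ⟪ybar, v ty⟫ := by
      rw [hveq, hwdef, real_inner_smul_right]
      calc dbar / dtil = (2 * dtil)⁻¹ * (2 * dbar) := by field_simp
      _ ≤ (2 * dtil)⁻¹ * ⟪ybar, xp - xm⟫ :=
          mul_le_mul_of_nonneg_left hub (by positivity)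
    exact ⟨hfin, div_pos hdbar hdtil⟩
end
end

section
/- Suppose ‖·‖ = ‖·‖₂ is the Euclidean norm on ℝ^d. Then for any d_* > 0, any a < d_* and any D̄ > 0, κ(a,d_*,D̄) ≤ sqrt( max{ 1 − (d_* − a)²/(4·D̄²), (d_* + a)/(2·d_*) } ). In particular, for any w,z ∈ ℝ^d with ‖w‖₂ = 1, w^⊤z ≥ γ for some γ > 0, and ‖z‖₂ ≤ δ, one has min_{β∈[0,1]} ‖w − βz‖₂ ≤ sqrt( max{ 1 − (γ/δ)², 1 − γ } ). -/
noncomputable section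
open scoped Classical
open scoped RealInnerProductSpace

/-- The contraction factor `κ(a,d_*,D̄)` for the Euclidean norm, where the gradient
of the norm at a unit vector `w` is `w` itself. -/
def kappaL2 (d : ℕ) (a dstar Dbar : ℝ) : ℝ :=
  sSup {t : ℝ | ∃ w z : E d, ‖w‖ = 1 ∧
    (1 - a / dstar) / 2 ≤ ⟪w, z⟫ ∧
    ‖z‖ ≤ Dbar / dstar ∧
    t = sInf ((fun β : ℝ => ‖w - β • z‖) '' Set.Icc (0 : ℝ) 1)}

section InnerProductSpace

variable {F : Type*} [NormedAddCommGroup F] [InnerProductSpace ℝ F]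

theorem norm_sub_smul_sq_of_norm_eq_one {w : F} (hw : ‖w‖ = 1) (z : F) (β : ℝ) :
    ‖w - β • z‖ ^ 2 = 1 - 2 * β * ⟪w, z⟫ + β ^ 2 * ‖z‖ ^ 2 := by
  rw [norm_sub_sq_real, hw, real_inner_smul_right, norm_smul, mul_pow, Real.norm_eq_abs, sq_abs]
  ring

theorem sInf_norm_sub_smul_Icc_le (w z : F) {β : ℝ} (hβ : β ∈ Set.Icc (0 : ℝ) 1) :
    sInf ((fun β : ℝ => ‖w - β • z‖) '' Set.Icc (0 : ℝ) 1) ≤ ‖w - β • z‖ :=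
  csInf_le ⟨0, by rintro _ ⟨_, _, rfl⟩; positivity⟩ ⟨β, hβ, rfl⟩

/-- The step `β = γ / ‖z‖²` minimises the upper bound `1 - 2βγ + β²‖z‖²` of `‖w - βz‖²`; when
it exceeds `1` the full step `β = 1` is taken instead. -/
theorem sInf_norm_sub_smul_Icc_le_sqrt {w z : F} {γ δ : ℝ} (hw : ‖w‖ = 1) (hγ : 0 < γ)
    (hwz : γ ≤ ⟪w, z⟫) (hz : ‖z‖ ≤ δ) :
    sInf ((fun β : ℝ => ‖w - β • z‖) '' Set.Icc (0 : ℝ) 1) ≤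
      Real.sqrt (max (1 - (γ / δ) ^ 2) (1 - γ)) := by
  rcases le_or_gt γ (‖z‖ ^ 2) with hle | hlt
  · have hz2 : 0 < ‖z‖ ^ 2 := hγ.trans_le hle
    set β := γ / ‖z‖ ^ 2 with hβ_def
    have hβ : β ∈ Set.Icc (0 : ℝ) 1 := ⟨by positivity, div_le_one_of_le₀ hle hz2.le⟩
    have hsq : ‖w - β • z‖ ^ 2 ≤ 1 - (γ / δ) ^ 2 := calc
      ‖w - β • z‖ ^ 2 ≤ 1 - 2 * β * γ + β ^ 2 * ‖z‖ ^ 2 := by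
        rw [norm_sub_smul_sq_of_norm_eq_one hw]; nlinarith [hβ.1]
      _ = 1 - γ ^ 2 / ‖z‖ ^ 2 := by rw [hβ_def]; field_simp; ring
      _ ≤ 1 - (γ / δ) ^ 2 := by
        rw [div_pow]
        gcongr
    calc _ ≤ ‖w - β • z‖ := sInf_norm_sub_smul_Icc_le w z hβ
      _ ≤ Real.sqrt (1 - (γ / δ) ^ 2) := Real.le_sqrt_of_sq_le hsq
      _ ≤ _ := Real.sqrt_le_sqrt (le_max_left _ _)
  · have hsq : ‖w - (1 : ℝ) • z‖ ^ 2 ≤ 1 - γ := by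
      rw [norm_sub_smul_sq_of_norm_eq_one hw]; linarith
    calc _ ≤ ‖w - (1 : ℝ) • z‖ := sInf_norm_sub_smul_Icc_le w z ⟨zero_le_one, le_rfl⟩
      _ ≤ Real.sqrt (1 - γ) := Real.le_sqrt_of_sq_le hsq
      _ ≤ _ := Real.sqrt_le_sqrt (le_max_right _ _)

end InnerProductSpace

theorem kappaL2_bound_general
    {d : ℕ}
    (a dstar Dbar : ℝ) (hdstar : 0 < dstar) (ha : a < dstar) :
    kappaL2 d a dstar Dbar ≤
      Real.sqrt (max (1 - (dstar - a) ^ 2 / (4 * Dbar ^ 2)) ((dstar + a) / (2 * dstar))) ∧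
    ∀ (w z : E d) (γ δ : ℝ), ‖w‖ = 1 → 0 < γ → γ ≤ ⟪w, z⟫ → ‖z‖ ≤ δ →
      sInf ((fun β : ℝ => ‖w - β • z‖) '' Set.Icc (0 : ℝ) 1) ≤
        Real.sqrt (max (1 - (γ / δ) ^ 2) (1 - γ)) := by
  refine ⟨Real.sSup_le ?_ (Real.sqrt_nonneg _),
    fun w z γ δ hw hγ hwz hz => sInf_norm_sub_smul_Icc_le_sqrt hw hγ hwz hz⟩
  rintro t ⟨w, z, hw, hwz, hz, rfl⟩
  have hγ : 0 < (1 - a / dstar) / 2 := by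
    have : a / dstar < 1 := (div_lt_one hdstar).2 ha
    linarith
  have hγδ : (1 - a / dstar) / 2 / (Dbar / dstar) = (dstar - a) / (2 * Dbar) := by
    rw [one_sub_div hdstar.ne', div_right_comm, div_div_div_cancel_right₀ hdstar.ne', div_div,
      mul_comm]
  have h_one_sub : 1 - (1 - a / dstar) / 2 = (dstar + a) / (2 * dstar) := by
    field_simp; ring
  simpa only [hγδ, h_one_sub, div_pow, mul_pow, show (2 : ℝ) ^ 2 = 4 by norm_num] using
    sInf_norm_sub_smul_Icc_le_sqrt hw hγ hwz hz

/-- Lemma `kappa-L2`: bound on `κ(a,d_*,D̄)` for `ℓ₂`-norm costs,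
together with the underlying pointwise bound on `min_{β∈[0,1]} ‖w - βz‖₂`. -/
theorem kappaL2_bound
    {d : ℕ} (hd : 1 ≤ d)
    (a dstar Dbar : ℝ) (hdstar : 0 < dstar) (ha : a < dstar) (hDbar : 0 < Dbar) :
    kappaL2 d a dstar Dbar ≤
      Real.sqrt (max (1 - (dstar - a) ^ 2 / (4 * Dbar ^ 2)) ((dstar + a) / (2 * dstar))) ∧
    ∀ (w z : E d) (γ δ : ℝ), ‖w‖ = 1 → 0 < γ → γ ≤ ⟪w, z⟫ → ‖z‖ ≤ δ →
      sInf ((fun β : ℝ => ‖w - β • z‖) '' Set.Icc (0 : ℝ) 1) ≤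
        Real.sqrt (max (1 - (γ / δ) ^ 2) (1 - γ)) :=
  kappaL2_bound_general a dstar Dbar hdstar ha
end
end

section
/- Let ‖·‖ be a norm on ℝ^d that is not a positive scalar multiple of the Euclidean norm ‖·‖₂. Then there exist y, v ∈ ℝ^d \ {0} such that v ∈ argmax{ y^⊤x : ‖x‖ ≤ 1 } (equivalently, v is a subgradient of the dual norm ‖·‖_* at y) and v is not a scalar multiple of y. -/
noncomputable section
open scoped RealInnerProductSpace

lemma aux_sum_le {d : ℕ} (p : Seminorm ℝ (E d)) {ι : Type*} (s : Finset ι) (f : ι → E d) :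
    p (∑ i ∈ s, f i) ≤ ∑ i ∈ s, p (f i) := by
  classical
  induction s using Finset.induction with
  | empty => simp
  | insert _ _ h ih =>
    rw [Finset.sum_insert h, Finset.sum_insert h]
    exact le_trans (map_add_le_add p _ _) (add_le_add_right ih _)

lemma aux_coord_le {d : ℕ} (x : E d) (i : Fin d) : |x i| ≤ ‖x‖ := by
  rw [EuclideanSpace.norm_eq]
  have h1 : |x i| = Real.sqrt (‖x i‖ ^ 2) := by
    rw [Real.sqrt_sq_eq_abs]; simp [Real.norm_eq_abs]
  rw [h1]
  apply Real.sqrt_le_sqrt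
  exact Finset.single_le_sum (f := fun j => ‖x j‖ ^ 2) (fun j _ => by positivity)
    (Finset.mem_univ i)

lemma aux_bound {d : ℕ} (p : Seminorm ℝ (E d)) : ∃ C : ℝ, 0 < C ∧ ∀ x, p x ≤ C * ‖x‖ := by
  refine ⟨(∑ i : Fin d, p (EuclideanSpace.single i 1)) + 1, by positivity, fun x => ?_⟩
  have hx : x = ∑ i : Fin d, x i • EuclideanSpace.single i (1 : ℝ) := by
    ext j
    rw [WithLp.ofLp_sum, Finset.sum_apply]
    simp only [PiLp.smul_apply, EuclideanSpace.single_apply, smul_eq_mul]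
    simp [Finset.sum_ite_eq', mul_comm]
  calc p x = p (∑ i : Fin d, x i • EuclideanSpace.single i (1 : ℝ)) := by rw [← hx]
    _ ≤ ∑ i : Fin d, p (x i • EuclideanSpace.single i (1 : ℝ)) := aux_sum_le p _ _
    _ = ∑ i : Fin d, |x i| * p (EuclideanSpace.single i (1 : ℝ)) := by
        simp [map_smul_eq_mul, Real.norm_eq_abs]
    _ ≤ ∑ i : Fin d, ‖x‖ * p (EuclideanSpace.single i (1 : ℝ)) := by
        refine Finset.sum_le_sum fun i _ => ?_
        exact mul_le_mul_of_nonneg_right (aux_coord_le x i) (apply_nonneg p _)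
    _ = (∑ i : Fin d, p (EuclideanSpace.single i 1)) * ‖x‖ := by
        rw [Finset.sum_mul]; exact Finset.sum_congr rfl fun i _ => mul_comm _ _
    _ ≤ ((∑ i : Fin d, p (EuclideanSpace.single i 1)) + 1) * ‖x‖ := by
        apply mul_le_mul_of_nonneg_right _ (norm_nonneg x); linarith

lemma aux_cont {d : ℕ} (p : Seminorm ℝ (E d)) {C : ℝ} (hC : 0 < C)
    (hB : ∀ x, p x ≤ C * ‖x‖) : Continuous fun x : E d => (p x : ℝ) := by
  apply LipschitzWith.continuous (K := ⟨C, hC.le⟩)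
  apply LipschitzWith.of_dist_le_mul
  intro x y
  rw [Real.dist_eq, dist_eq_norm]
  have h1 : p x - p y ≤ p (x - y) := by
    have := map_add_le_add p (x - y) y
    simp only [sub_add_cancel] at this
    linarith
  have h2 : p y - p x ≤ p (x - y) := by
    have := map_add_le_add p (y - x) x
    simp only [sub_add_cancel] at this
    have he : p (y - x) = p (x - y) := by
      rw [← map_neg_eq_map p (y - x)]; congr 1; abel
    linarith [he ▸ this]
  have := hB (x - y)
  rw [abs_sub_le_iff]
  constructor <;> (change _ ≤ C * _; linarith)

lemma aux_normalize_lip {d : ℕ} (x y : E d) (hx : (1:ℝ)/2 ≤ ‖x‖) (hy : (1:ℝ)/2 ≤ ‖y‖) :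
    ‖‖x‖⁻¹ • x - ‖y‖⁻¹ • y‖ ≤ 4 * ‖x - y‖ := by
  have hx0 : (0:ℝ) < ‖x‖ := by linarith
  have hy0 : (0:ℝ) < ‖y‖ := by linarith
  have hdec : ‖x‖⁻¹ • x - ‖y‖⁻¹ • y = ‖x‖⁻¹ • (x - y) + (‖x‖⁻¹ - ‖y‖⁻¹) • y := by
    rw [smul_sub, sub_smul]; abel
  rw [hdec]
  have h1 : ‖‖x‖⁻¹ • (x - y)‖ = ‖x‖⁻¹ * ‖x - y‖ := by
    rw [norm_smul, Real.norm_eq_abs, abs_of_pos (by positivity)]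
  have h2 : ‖(‖x‖⁻¹ - ‖y‖⁻¹) • y‖ = |‖x‖⁻¹ - ‖y‖⁻¹| * ‖y‖ := by
    rw [norm_smul, Real.norm_eq_abs]
  have h3 : |‖x‖⁻¹ - ‖y‖⁻¹| * ‖y‖ ≤ 2 * ‖x - y‖ := by
    have he : ‖x‖⁻¹ - ‖y‖⁻¹ = (‖y‖ - ‖x‖) / (‖x‖ * ‖y‖) := by field_simp
    rw [he, abs_div, abs_of_pos (by positivity : (0:ℝ) < ‖x‖ * ‖y‖)]
    have h4 : |‖y‖ - ‖x‖| ≤ ‖x - y‖ := by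
      have := abs_norm_sub_norm_le y x
      rwa [show ‖y - x‖ = ‖x - y‖ from norm_sub_rev y x] at this
    rw [div_mul_eq_mul_div, div_le_iff₀ (by positivity)]
    calc |‖y‖ - ‖x‖| * ‖y‖ ≤ ‖x - y‖ * ‖y‖ :=
          mul_le_mul_of_nonneg_right h4 (norm_nonneg y)
      _ ≤ 2 * ‖x - y‖ * (‖x‖ * ‖y‖) := by nlinarith [mul_nonneg (mul_nonneg (norm_nonneg (x - y)) (norm_nonneg y)) (by linarith : (0:ℝ) ≤ 2 * ‖x‖ - 1)]
  have h5 : ‖x‖⁻¹ * ‖x - y‖ ≤ 2 * ‖x - y‖ := by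
    have : ‖x‖⁻¹ ≤ 2 := by
      rw [inv_le_comm₀ (by positivity) (by norm_num)]; linarith
    nlinarith [norm_nonneg (x - y)]
  calc ‖‖x‖⁻¹ • (x - y) + (‖x‖⁻¹ - ‖y‖⁻¹) • y‖
      ≤ ‖‖x‖⁻¹ • (x - y)‖ + ‖(‖x‖⁻¹ - ‖y‖⁻¹) • y‖ := norm_add_le _ _
    _ ≤ 2 * ‖x - y‖ + 2 * ‖x - y‖ := by rw [h1, h2]; linarith
    _ = 4 * ‖x - y‖ := by ring

lemma aux_chain {d : ℕ} (p : Seminorm ℝ (E d)) (C : ℝ) (hC0 : 0 ≤ C)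
    (hstep : ∀ a b : E d, ‖a‖ = 1 → ‖b‖ = 1 → |p a - p b| ≤ C / 2 * ‖a - b‖ ^ 2)
    (a b : E d) (ha : ‖a‖ = 1) (hb : ‖b‖ = 1) (hab : 0 ≤ ⟪a, b⟫) : p a = p b := by
  set m : ℝ → E d := fun t => (1 - t) • a + t • b with hm
  set u : ℝ → E d := fun t => ‖m t‖⁻¹ • m t with hu
  have hmlb : ∀ t : ℝ, t ∈ Set.Icc (0:ℝ) 1 → (1:ℝ)/2 ≤ ‖m t‖ := by
    rintro t ⟨ht0, ht1⟩
    have hsq : ‖m t‖ ^ 2 = (1 - t) ^ 2 + 2 * ((1 - t) * t) * ⟪a, b⟫ + t ^ 2 := by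
      rw [hm]
      rw [norm_add_sq_real, norm_smul, norm_smul, real_inner_smul_left, real_inner_smul_right]
      rw [ha, hb]
      simp [Real.norm_eq_abs, mul_pow, sq_abs]
      ring
    nlinarith [norm_nonneg (m t), sq_nonneg (1 - 2*t), mul_nonneg (mul_nonneg (by linarith : (0:ℝ) ≤ 1 - t) ht0) hab]
  have hunorm : ∀ t : ℝ, t ∈ Set.Icc (0:ℝ) 1 → ‖u t‖ = 1 := by
    intro t ht
    have := hmlb t ht
    rw [hu]
    simp only [norm_smul, Real.norm_eq_abs, abs_of_pos (by positivity : (0:ℝ) < ‖m t‖⁻¹)]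
    field_simp
  have hmdiff : ∀ s t : ℝ, m s - m t = (s - t) • (b - a) := by
    intro s t
    rw [hm]
    simp only [smul_sub, sub_smul, one_smul]
    abel
  have hudiff : ∀ s t : ℝ, s ∈ Set.Icc (0:ℝ) 1 → t ∈ Set.Icc (0:ℝ) 1 →
      ‖u s - u t‖ ≤ 8 * |s - t| := by
    intro s t hs ht
    have h1 := aux_normalize_lip (m s) (m t) (hmlb s hs) (hmlb t ht)
    have h2 : ‖m s - m t‖ = |s - t| * ‖b - a‖ := by
      rw [hmdiff, norm_smul, Real.norm_eq_abs]
    have h3 : ‖b - a‖ ≤ 2 := by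
      calc ‖b - a‖ ≤ ‖b‖ + ‖a‖ := norm_sub_le b a
        _ = 2 := by rw [ha, hb]; norm_num
    calc ‖u s - u t‖ ≤ 4 * ‖m s - m t‖ := h1
      _ = 4 * (|s - t| * ‖b - a‖) := by rw [h2]
      _ ≤ 4 * (|s - t| * 2) := by
          have := abs_nonneg (s - t)
          nlinarith
      _ = 8 * |s - t| := by ring
  -- telescoping
  have key : ∀ n : ℕ, 0 < n → |p b - p a| ≤ 32 * C / n := by
    intro n hn
    have hnR : (0:ℝ) < n := by exact_mod_cast hn
    have hmem : ∀ k : ℕ, k ≤ n → ((k:ℝ)/n) ∈ Set.Icc (0:ℝ) 1 := by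
      intro k hk
      constructor
      · positivity
      · rw [div_le_one hnR]; exact_mod_cast hk
    have hu0 : u 0 = a := by
      have hm0 : m 0 = a := by rw [hm]; simp
      rw [hu]; simp only [hm0, ha]; norm_num
    have hu1 : u 1 = b := by
      have hm1 : m 1 = b := by rw [hm]; simp
      rw [hu]; simp only [hm1, hb]; norm_num
    set f : ℕ → ℝ := fun k => p (u (k / n)) with hf
    have hf0 : f 0 = p a := by simp [hf, hu0]
    have hfn : f n = p b := by
      simp only [hf]
      rw [div_self (ne_of_gt hnR), hu1]
    have htel : ∑ k ∈ Finset.range n, (f (k+1) - f k) = p b - p a := by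
      rw [Finset.sum_range_sub f n, hf0, hfn]
    have hterm : ∀ k ∈ Finset.range n, |f (k+1) - f k| ≤ 32 * C / n ^ 2 := by
      intro k hk
      rw [Finset.mem_range] at hk
      have hk1 : ((k:ℝ)+1)/n ∈ Set.Icc (0:ℝ) 1 := by
        have := hmem (k+1) hk
        push_cast at this ⊢
        exact this
      have hk0 : ((k:ℝ))/n ∈ Set.Icc (0:ℝ) 1 := hmem k (le_of_lt hk)
      have hd : ‖u (((k:ℝ)+1)/n) - u ((k:ℝ)/n)‖ ≤ 8 / n := by
        have := hudiff (((k:ℝ)+1)/n) ((k:ℝ)/n) hk1 hk0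
        have he : ((k:ℝ)+1)/n - (k:ℝ)/n = 1/n := by field_simp; ring
        rw [he] at this
        rw [abs_of_pos (by positivity : (0:ℝ) < 1/n)] at this
        calc ‖u (((k:ℝ)+1)/n) - u ((k:ℝ)/n)‖ ≤ 8 * (1/n) := this
          _ = 8 / n := by ring
      have hs := hstep (u (((k:ℝ)+1)/n)) (u ((k:ℝ)/n)) (hunorm _ hk1) (hunorm _ hk0)
      have hfk : f (k+1) = p (u (((k:ℝ)+1)/n)) := by
        simp only [hf]
        norm_num
      have hfk0 : f k = p (u ((k:ℝ)/n)) := rfl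
      rw [hfk, hfk0]
      calc |p (u (((k:ℝ)+1)/n)) - p (u ((k:ℝ)/n))|
          ≤ C / 2 * ‖u (((k:ℝ)+1)/n) - u ((k:ℝ)/n)‖ ^ 2 := hs
        _ ≤ C / 2 * (8/n)^2 := by
            apply mul_le_mul_of_nonneg_left _ (by linarith)
            apply pow_le_pow_left₀ (norm_nonneg _) hd
        _ = 32 * C / n ^ 2 := by field_simp; ring
    calc |p b - p a| = |∑ k ∈ Finset.range n, (f (k+1) - f k)| := by rw [htel]
      _ ≤ ∑ k ∈ Finset.range n, |f (k+1) - f k| := Finset.abs_sum_le_sum_abs _ _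
      _ ≤ ∑ _k ∈ Finset.range n, 32 * C / n ^ 2 := Finset.sum_le_sum hterm
      _ = n * (32 * C / n ^ 2) := by rw [Finset.sum_const, Finset.card_range]; ring
      _ = 32 * C / n := by field_simp
  -- conclude
  by_contra hne
  have hpos : 0 < |p b - p a| := by
    rw [abs_pos, sub_ne_zero]
    exact fun h => hne h.symm
  obtain ⟨n, hn⟩ := exists_nat_gt (32 * C / |p b - p a|)
  have hn0 : 0 < n := by
    by_contra h
    push_neg at h
    interval_cases n
    simp at hn
    nlinarith [div_nonneg (by linarith : (0:ℝ) ≤ 32 * C) hpos.le]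
  have h1 := key n hn0
  have hnR : (0:ℝ) < n := by exact_mod_cast hn0
  rw [div_lt_iff₀ hpos] at hn
  rw [le_div_iff₀ hnR] at h1
  nlinarith

lemma aux_theorem_body
    {d : ℕ} (hd : 1 ≤ d)
    (p : Seminorm ℝ (E d)) (hpdef : ∀ x : E d, p x = 0 → x = 0)
    (hne : ¬ ∃ t : ℝ, 0 < t ∧ ∀ x : E d, (p x : ℝ) = t * ‖x‖)
    (C : ℝ) (hC0 : 0 < C) (hB : ∀ x : E d, p x ≤ C * ‖x‖)
    (hcont : Continuous fun x : E d => (p x : ℝ))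
    (hchain : ∀ a b : E d, ‖a‖ = 1 → ‖b‖ = 1 → 0 ≤ ⟪a, b⟫ →
      ((∀ a b : E d, ‖a‖ = 1 → ‖b‖ = 1 → |p a - p b| ≤ C / 2 * ‖a - b‖ ^ 2) → p a = p b))
    (hcon : ∀ y v : E d, y ≠ 0 → v ≠ 0 → p v ≤ 1 →
      (∀ x : E d, p x ≤ 1 → ⟪y, x⟫ ≤ ⟪y, v⟫) → ∃ t : ℝ, v = t • y ∨ y = t • v) :
    False := by
  classical
  -- unit vector
  set e : E d := EuclideanSpace.single (⟨0, hd⟩ : Fin d) (1 : ℝ) with he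
  have he1 : ‖e‖ = 1 := by rw [he, EuclideanSpace.norm_single]; norm_num
  have he0 : e ≠ 0 := by intro h; rw [h] at he1; simp at he1
  -- lower bound via compact sphere
  have hsc : IsCompact (Metric.sphere (0 : E d) 1) := isCompact_sphere 0 1
  have hsn : (Metric.sphere (0 : E d) 1).Nonempty :=
    ⟨e, by rwa [mem_sphere_zero_iff_norm]⟩
  obtain ⟨z, hz, hzmin⟩ := hsc.exists_isMinOn hsn hcont.continuousOn
  have hz1 : ‖z‖ = 1 := by rwa [mem_sphere_zero_iff_norm] at hz
  have hz0 : z ≠ 0 := by intro h; rw [h] at hz1; simp at hz1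
  have hc : 0 < p z :=
    lt_of_le_of_ne (apply_nonneg p z) (fun h => hz0 (hpdef z h.symm))
  have hlow : ∀ x : E d, p z * ‖x‖ ≤ p x := by
    intro x
    rcases eq_or_ne x 0 with rfl | hx
    · simp
    · have hxn : (0 : ℝ) < ‖x‖ := norm_pos_iff.mpr hx
      have hu : ‖x‖⁻¹ • x ∈ Metric.sphere (0 : E d) 1 := by
        rw [mem_sphere_zero_iff_norm, norm_smul, Real.norm_eq_abs,
          abs_of_pos (by positivity)]
        field_simp
      have h1 : p z ≤ p (‖x‖⁻¹ • x) := isMinOn_iff.mp hzmin _ hu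
      rw [map_smul_eq_mul, Real.norm_eq_abs, abs_of_pos (by positivity)] at h1
      calc p z * ‖x‖ ≤ (‖x‖⁻¹ * p x) * ‖x‖ :=
            mul_le_mul_of_nonneg_right h1 hxn.le
        _ = p x := by field_simp
  -- the key dual inequality
  have hkey : ∀ y : E d, y ≠ 0 → ∀ x : E d, p x ≤ 1 → ⟪y, x⟫ ≤ (p y)⁻¹ * ‖y‖ ^ 2 := by
    intro y hy
    have hpy : 0 < p y :=
      lt_of_le_of_ne (apply_nonneg p y) (fun h => hy (hpdef y h.symm))
    set K : Set (E d) := {x | p x ≤ 1} with hKdef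
    have hKc : IsClosed K := isClosed_le hcont continuous_const
    have hKsub : K ⊆ Metric.closedBall 0 (p z)⁻¹ := by
      intro x hx
      rw [Metric.mem_closedBall, dist_zero_right]
      have h1 : p z * ‖x‖ ≤ 1 := le_trans (hlow x) hx
      calc ‖x‖ = (p z)⁻¹ * (p z * ‖x‖) := by field_simp
        _ ≤ (p z)⁻¹ * 1 := mul_le_mul_of_nonneg_left h1 (by positivity)
        _ = (p z)⁻¹ := mul_one _
    have hK : IsCompact K :=
      (isCompact_closedBall (0 : E d) (p z)⁻¹).of_isClosed_subset hKc hKsub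
    have hKne : K.Nonempty := ⟨0, by simp [hKdef]⟩
    have hcf : Continuous fun x : E d => ⟪y, x⟫ := continuous_const.inner continuous_id
    obtain ⟨v, hvK, hvmax⟩ := hK.exists_isMaxOn hKne hcf.continuousOn
    have hvK' : p v ≤ 1 := hvK
    set w : E d := (p y)⁻¹ • y with hw
    have hwK : w ∈ K := by
      simp only [hKdef, Set.mem_setOf_eq, hw, map_smul_eq_mul, Real.norm_eq_abs,
        abs_of_pos (by positivity : (0:ℝ) < (p y)⁻¹)]
      rw [inv_mul_cancel₀ (ne_of_gt hpy)]
    have hyw : ⟪y, w⟫ = (p y)⁻¹ * ‖y‖ ^ 2 := by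
      rw [hw, real_inner_smul_right, real_inner_self_eq_norm_sq]
    have hy2 : 0 < ‖y‖ ^ 2 := pow_pos (norm_pos_iff.mpr hy) 2
    have hvw : ⟪y, w⟫ ≤ ⟪y, v⟫ := isMaxOn_iff.mp hvmax w hwK
    have hv0 : v ≠ 0 := by
      intro h
      rw [h, inner_zero_right, hyw] at hvw
      exact absurd hvw (not_le.mpr (mul_pos (inv_pos.mpr hpy) hy2))
    obtain ⟨t, ht⟩ := hcon y v hy hv0 hvK' (fun x hx => isMaxOn_iff.mp hvmax x hx)
    obtain ⟨s, hs⟩ : ∃ s : ℝ, v = s • y := by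
      rcases ht with h | h
      · exact ⟨t, h⟩
      · have ht0 : t ≠ 0 := by rintro rfl; rw [zero_smul] at h; exact hy h
        exact ⟨t⁻¹, by rw [h, smul_smul, inv_mul_cancel₀ ht0, one_smul]⟩
    have hyv : ⟪y, v⟫ = s * ‖y‖ ^ 2 := by
      rw [hs, real_inner_smul_right, real_inner_self_eq_norm_sq]
    have hsge : (p y)⁻¹ ≤ s := by
      rw [hyw, hyv] at hvw; nlinarith
    have hsle : s ≤ (p y)⁻¹ := by
      have h1 : p v = |s| * p y := by rw [hs, map_smul_eq_mul, Real.norm_eq_abs]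
      have h2 : |s| * p y ≤ 1 := by rw [← h1]; exact hvK'
      have h3 : |s| ≤ (p y)⁻¹ := by
        calc |s| = (p y)⁻¹ * (|s| * p y) := by field_simp
          _ ≤ (p y)⁻¹ * 1 := mul_le_mul_of_nonneg_left h2 (by positivity)
          _ = (p y)⁻¹ := mul_one _
      exact le_trans (le_abs_self s) h3
    have hse : s = (p y)⁻¹ := le_antisymm hsle hsge
    intro x hx
    calc ⟪y, x⟫ ≤ ⟪y, v⟫ := isMaxOn_iff.mp hvmax x hx
      _ = (p y)⁻¹ * ‖y‖ ^ 2 := by rw [hyv, hse]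
  -- the second-order step inequality
  have hstep : ∀ a b : E d, ‖a‖ = 1 → ‖b‖ = 1 → |p a - p b| ≤ C / 2 * ‖a - b‖ ^ 2 := by
    have half : ∀ a b : E d, ‖a‖ = 1 → ‖b‖ = 1 → p b - p a ≤ C / 2 * ‖a - b‖ ^ 2 := by
      intro a b ha hb
      have ha0 : a ≠ 0 := by intro h; rw [h] at ha; simp at ha
      have hb0 : b ≠ 0 := by intro h; rw [h] at hb; simp at hb
      have hpa : 0 < p a :=
        lt_of_le_of_ne (apply_nonneg p a) (fun h => ha0 (hpdef a h.symm))
      have hpb : 0 < p b :=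
        lt_of_le_of_ne (apply_nonneg p b) (fun h => hb0 (hpdef b h.symm))
      have hx1 : p ((p a)⁻¹ • a) ≤ 1 := by
        rw [map_smul_eq_mul, Real.norm_eq_abs, abs_of_pos (by positivity),
          inv_mul_cancel₀ (ne_of_gt hpa)]
      have h2 := hkey b hb0 _ hx1
      rw [real_inner_smul_right, hb] at h2
      have h3 : p b * ⟪b, a⟫ ≤ p a := by
        calc p b * ⟪b, a⟫ = (p a * p b) * ((p a)⁻¹ * ⟪b, a⟫) := by field_simp
          _ ≤ (p a * p b) * ((p b)⁻¹ * 1 ^ 2) :=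
              mul_le_mul_of_nonneg_left h2 (by positivity)
          _ = p a := by field_simp
      have hin : ⟪b, a⟫ = 1 - ‖a - b‖ ^ 2 / 2 := by
        have hn := norm_sub_sq_real a b
        rw [ha, hb] at hn
        rw [real_inner_comm]
        nlinarith
      have h4 : p b ≤ C := by
        have := hB b; rw [hb, mul_one] at this; exact this
      nlinarith [mul_nonneg (sub_nonneg.mpr h4) (sq_nonneg ‖a - b‖)]
    intro a b ha hb
    rw [abs_sub_le_iff]
    constructor
    · have h := half b a hb ha
      rwa [norm_sub_rev] at h
    · exact half a b ha hb
  -- all unit vectors have equal p-value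
  have hall : ∀ a b : E d, ‖a‖ = 1 → ‖b‖ = 1 → p a = p b := by
    intro a b ha hb
    rcases le_or_gt 0 ⟪a, b⟫ with h | h
    · exact hchain a b ha hb h hstep
    · have hb' : ‖-b‖ = 1 := by rw [norm_neg, hb]
      have h' : 0 ≤ ⟪a, -b⟫ := by rw [inner_neg_right]; linarith
      have := hchain a (-b) ha hb' h' hstep
      rwa [map_neg_eq_map] at this
  -- conclude
  refine hne ⟨p e, lt_of_le_of_ne (apply_nonneg p e) (fun h => he0 (hpdef e h.symm)), ?_⟩
  intro x
  rcases eq_or_ne x 0 with rfl | hx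
  · simp
  · have hxn : (0 : ℝ) < ‖x‖ := norm_pos_iff.mpr hx
    have hu1 : ‖‖x‖⁻¹ • x‖ = 1 := by
      rw [norm_smul, Real.norm_eq_abs, abs_of_pos (by positivity)]; field_simp
    have h1 := hall (‖x‖⁻¹ • x) e hu1 he1
    have h2 : p x = ‖x‖ * p (‖x‖⁻¹ • x) := by
      rw [map_smul_eq_mul, Real.norm_eq_abs, abs_of_pos (by positivity)]
      field_simp
    rw [h2, h1]; ring

/-- Lemma `l2-norm-symmetry`: if a norm on `ℝ^d` is not a
positive scalar multiple of the Euclidean norm, then there exist `y, v ≠ 0` such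
that `v` maximizes `⟪y,·⟫` over the unit ball of the norm (i.e. `v` is a
subgradient of the dual norm at `y`) and `v` is not a scalar multiple of `y`. -/
theorem exists_nonparallel_dual_subgradient
    {d : ℕ} (hd : 1 ≤ d)
    (p : Seminorm ℝ (E d)) (hpdef : ∀ x : E d, p x = 0 → x = 0)
    (hne : ¬ ∃ t : ℝ, 0 < t ∧ ∀ x : E d, (p x : ℝ) = t * ‖x‖) :
    ∃ y v : E d, y ≠ 0 ∧ v ≠ 0 ∧ p v ≤ 1 ∧
      (∀ x : E d, p x ≤ 1 → ⟪y, x⟫ ≤ ⟪y, v⟫) ∧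
      ¬ ∃ t : ℝ, v = t • y ∨ y = t • v := by
  by_contra hcontra
  push_neg at hcontra
  obtain ⟨C, hC0, hB⟩ := aux_bound p
  exact aux_theorem_body hd p hpdef hne C hC0 hB (aux_cont p hC0 hB)
    (fun a b ha hb hab hstep => aux_chain p C hC0.le hstep a b ha hb hab) hcontra
end
end
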